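/- Define A(0) = 1, A(-1) = -l + l*m^2 + m^4 + 2*l*m^4 + l^2*m^4 + l*m^6 - l*m^8, and A(p) = c*A(p+1) - d*A(p+2) for every integer p ≤ -2 (the Hoste–Shanahan recurrence for the A-polynomials of the twist knots K_p with negative p). Then for every integer p ≤ 0, (m^2 + l)^(2*|p|) * m^(2*|p|) * h(p) = A(p) in the field F = ℚ(l, m). -/
import Mathlib


noncomputable section
open MvPolynomial

/-- `F = ℚ(l, m)`, the field of rational functions in two variables over `ℚ`. -/
abbrev Fq : Type := FractionRing (MvPolynomial (Fin 2) ℚ)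

/-- The variable `l` of `ℚ(l, m)`. -/
def lF : Fq := algebraMap (MvPolynomial (Fin 2) ℚ) Fq (X 0)

/-- The variable `m` of `ℚ(l, m)`. -/
def mF : Fq := algebraMap (MvPolynomial (Fin 2) ℚ) Fq (X 1)

/-- `x0 = (l m² + 1)/(m² + l)`. -/
def x0 : Fq := (lF * mF ^ 2 + 1) / (mF ^ 2 + lF)

/-- `a0 = m⁴ - x0 m⁴ + x0² m² + m² + 1 - x0`. -/
def a0 : Fq := mF ^ 4 - x0 * mF ^ 4 + x0 ^ 2 * mF ^ 2 + mF ^ 2 + 1 - x0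

/-- `b0 = m⁴ - x0 m² + 1`. -/
def b0 : Fq := mF ^ 4 - x0 * mF ^ 2 + 1

/-- The coefficient `c` of the Hoste–Shanahan recurrence. -/
def cF : Fq := -lF + lF ^ 2 + 2 * lF * mF ^ 2 + mF ^ 4 + 2 * lF * mF ^ 4 +
  lF ^ 2 * mF ^ 4 + 2 * lF * mF ^ 6 + mF ^ 8 - lF * mF ^ 8

/-- The coefficient `d = m⁴ (l + m²)⁴` of the Hoste–Shanahan recurrence. -/
def dF : Fq := mF ^ 4 * (lF + mF ^ 2) ^ 4

lemma mF_ne : mF ≠ 0 := by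
  unfold mF
  rw [Ne, IsFractionRing.to_map_eq_zero_iff]
  exact X_ne_zero 1

lemma ml_ne : mF ^ 2 + lF ≠ 0 := by
  unfold mF lF
  rw [← map_pow, ← map_add, Ne, IsFractionRing.to_map_eq_zero_iff]
  intro hzero
  have := congrArg (eval (fun i : Fin 2 => if i = 0 then (1 : ℚ) else 0)) hzero
  simp at this

lemma hx : x0 * (mF ^ 2 + lF) = lF * mF ^ 2 + 1 := by
  rw [x0, div_mul_cancel₀ _ ml_ne]

lemma key1 : cF = (mF ^ 2 + lF) ^ 2 * a0 := by
  unfold cF a0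
  linear_combination (mF ^ 6 + lF - x0 * mF ^ 4 - x0 * lF * mF ^ 2) * hx

lemma key2 : dF = (mF ^ 2 * (mF ^ 2 + lF) ^ 2) ^ 2 := by
  unfold dF
  ring

lemma key3 : (mF ^ 2 + lF) ^ 2 * (a0 - b0) = -lF + lF * mF ^ 2 + mF ^ 4 + 2 * lF * mF ^ 4 +
    lF ^ 2 * mF ^ 4 + lF * mF ^ 6 - lF * mF ^ 8 := by
  unfold a0 b0
  linear_combination (mF ^ 4 - mF ^ 6 - lF + lF * mF ^ 2 + x0 * mF ^ 4 + x0 * lF * mF ^ 2) * hx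

/-- Theorem 2.2 for `p ≤ 0`: `B_{K_p}(l, m) = A_{K_p}(l, m)`, where `A` is given by
the Hoste–Shanahan recurrence (negative direction) with initial values `A_{K_0} = 1`
and `A_{K_{-1}}`, and `B_{K_p}(l, m) = (m² + l)^(2|p|) m^(2|p|) h(p)`. -/
theorem stmt_14 (h : ℤ → Fq) (h0 : h 0 = 1) (h1 : h 1 = b0 / mF ^ 2)
    (hrec : ∀ p : ℤ, h p = (a0 / mF ^ 2) * h (p - 1) - h (p - 2))
    (A : ℤ → Fq)
    (hA0 : A 0 = 1)
    (hAm1 : A (-1) = -lF + lF * mF ^ 2 + mF ^ 4 + 2 * lF * mF ^ 4 +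
      lF ^ 2 * mF ^ 4 + lF * mF ^ 6 - lF * mF ^ 8)
    (hArec : ∀ p : ℤ, p ≤ -2 → A p = cF * A (p + 1) - dF * A (p + 2)) :
    ∀ p : ℤ, p ≤ 0 →
      (mF ^ 2 + lF) ^ (2 * |p|) * mF ^ (2 * |p|) * h p = A p := by
  have hm := mF_ne
  -- value of h at -1, cleared of denominators
  have hm1 : mF ^ 2 * h (-1) = a0 - b0 := by
    have t := hrec 1
    norm_num [h0, h1] at t
    field_simp at t
    linear_combination t
  -- the key induction with S = m²(m²+l)²
  have key : ∀ n : ℕ, (mF ^ 2 * (mF ^ 2 + lF) ^ 2) ^ n * h (-(n : ℤ)) = A (-(n : ℤ)) ∧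
      (mF ^ 2 * (mF ^ 2 + lF) ^ 2) ^ (n + 1) * h (-(n : ℤ) - 1) = A (-(n : ℤ) - 1) := by
    intro n
    induction n with
    | zero =>
      constructor
      · norm_num [h0, hA0]
      · norm_num [hAm1]
        linear_combination (mF ^ 2 + lF) ^ 2 * hm1 + key3
    | succ k ih =>
      obtain ⟨ih1, ih2⟩ := ih
      have e1 : (-(((k : ℕ) + 1 : ℕ) : ℤ)) = -(k : ℤ) - 1 := by push_cast; ring
      constructor
      · rw [e1]; exact ih2
      · rw [e1]
        have e2 : (-(k : ℤ) - 1 - 1) = -(k : ℤ) - 2 := by ring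
        rw [e2]
        -- h recurrence at -k, cleared of denominators
        have ht := hrec (-(k : ℤ))
        have ht' : mF ^ 2 * h (-(k : ℤ)) = a0 * h (-(k : ℤ) - 1) - mF ^ 2 * h (-(k : ℤ) - 2) := by
          rw [ht]; field_simp
        -- A recurrence at -k - 2
        have hA := hArec (-(k : ℤ) - 2) (by omega)
        have e4 : (-(k : ℤ) - 2 + 1) = -(k : ℤ) - 1 := by ring
        have e5 : (-(k : ℤ) - 2 + 2) = -(k : ℤ) := by ring
        rw [e4, e5] at hA
        rw [hA, ← ih1, ← ih2, key1, key2]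
        linear_combination ((mF ^ 2 * (mF ^ 2 + lF) ^ 2) ^ (k + 1) * (mF ^ 2 + lF) ^ 2) * ht'
  intro p hp
  obtain ⟨n, rfl⟩ : ∃ n : ℕ, p = -(n : ℤ) := ⟨(-p).toNat, by omega⟩
  have habs : |(-(n : ℤ))| = (n : ℤ) := by simp
  rw [habs]
  rw [show (2 * (n : ℤ)) = ((2 * n : ℕ) : ℤ) by push_cast; ring]
  rw [zpow_natCast, zpow_natCast]
  have hS : (mF ^ 2 * (mF ^ 2 + lF) ^ 2) ^ n = (mF ^ 2 + lF) ^ (2 * n) * mF ^ (2 * n) := by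
    rw [mul_pow, ← pow_mul, ← pow_mul]; exact mul_comm _ _
  rw [← hS]
  exact (key n).1
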